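/- arXiv:1407.2755 — 4 statements merged into one kernel-verified Lean document; each statement's English description precedes it below -/
import Mathlib

section
/- Let r ≥ 2 be an integer. For all φ with 0 < φ < π/(r+1), one has sin((r−1)φ)/sin((r+1)φ) > (r−1)/(r+1). -/
open Real

-- `sin x / x` is the slope of the secant of the concave function `sin` through the origin.
theorem Real.sin_div_self_lt_sin_div_self {x y : ℝ} (hx : 0 < x) (hxy : x < y) (hy : y ≤ π) :
    sin y / y < sin x / x := by
  have h := strictConcaveOn_sin_Icc.secant_strict_mono (a := 0) ⟨le_rfl, pi_pos.le⟩
    ⟨hx.le, (hxy.trans_le hy).le⟩ ⟨(hx.trans hxy).le, hy⟩ hx.ne' (hx.trans hxy).ne' hxy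
  simpa only [sin_zero, sub_zero] using h

theorem Real.div_lt_sin_div_sin {x y : ℝ} (hx : 0 < x) (hxy : x < y) (hy : y < π) :
    x / y < sin x / sin y := by
  have hy0 : 0 < y := hx.trans hxy
  have hsin : 0 < sin y := sin_pos_of_pos_of_lt_pi hy0 hy
  rw [div_lt_div_iff₀ hy0 hsin, mul_comm, ← div_lt_div_iff₀ hy0 hx]
  exact sin_div_self_lt_sin_div_self hx hxy hy.le

/-- for `r ≥ 2` and `0 < φ < π/(r+1)`,
`sin((r−1)φ)/sin((r+1)φ) > (r−1)/(r+1)`. -/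
theorem sin_ratio_gt (r : ℕ) (hr : 2 ≤ r) (φ : ℝ) (hφ0 : 0 < φ)
    (hφ1 : φ < π / (r + 1)) :
    Real.sin (((r : ℝ) - 1) * φ) / Real.sin (((r : ℝ) + 1) * φ) >
      ((r : ℝ) - 1) / ((r : ℝ) + 1) := by
  have hr' : (2 : ℝ) ≤ r := by exact_mod_cast hr
  have hlt_pi : ((r : ℝ) + 1) * φ < π := by
    rwa [lt_div_iff₀ (by positivity), mul_comm] at hφ1
  have h := div_lt_sin_div_sin (x := ((r : ℝ) - 1) * φ) (by nlinarith) (by nlinarith) hlt_pi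
  rwa [mul_div_mul_right _ _ hφ0.ne'] at h
end

section
/- Let r ≥ 2 be an integer, 0 < φ < π/(r+1), a = (sin((r+1)φ)/sin((r−1)φ))^{1/2}, and w = a·e^{iφ}. Define x = σ(φ) = (sin((r+1)φ))^{(r+1)/2} / (sin(2φ)·(sin((r−1)φ))^{(r−1)/2}). Then w satisfies the algebraic equation w^{r+1} − w²·x + x = 0, and so does its complex conjugate a·e^{−iφ}. -/
open Real Complex

/-- with `a = (sin((r+1)φ)/sin((r−1)φ))^{1/2}`, `w = a·e^{iφ}` and
`x = σ(φ) = (sin((r+1)φ))^{(r+1)/2}/(sin(2φ)(sin((r−1)φ))^{(r−1)/2})`, both `w` and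
its complex conjugate satisfy `w^{r+1} − w²x + x = 0`. -/
theorem saddle_point_equation (r : ℕ) (hr : 2 ≤ r) (φ : ℝ) (hφ0 : 0 < φ)
    (hφ1 : φ < π / (r + 1)) :
    let a : ℝ := Real.sqrt (Real.sin (((r : ℝ) + 1) * φ) / Real.sin (((r : ℝ) - 1) * φ))
    let x : ℝ := Real.sin (((r : ℝ) + 1) * φ) ^ (((r : ℝ) + 1) / 2) /
      (Real.sin (2 * φ) * Real.sin (((r : ℝ) - 1) * φ) ^ (((r : ℝ) - 1) / 2))
    let w : ℂ := (a : ℂ) * Complex.exp (Complex.I * (φ : ℂ))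
    w ^ (r + 1) - w ^ 2 * (x : ℂ) + (x : ℂ) = 0 ∧
      (starRingEnd ℂ) w ^ (r + 1) - (starRingEnd ℂ) w ^ 2 * (x : ℂ) + (x : ℂ) = 0 := by
  intro a x w
  have hr1 : (2 : ℝ) ≤ (r : ℝ) := by exact_mod_cast hr
  have hπ : ((r : ℝ) + 1) * φ < π := by
    have h : (0 : ℝ) < (r : ℝ) + 1 := by positivity
    rw [lt_div_iff₀ h] at hφ1
    linarith
  set s1 := Real.sin (((r : ℝ) + 1) * φ) with hs1def
  set s2 := Real.sin (((r : ℝ) - 1) * φ) with hs2def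
  set s := Real.sin (2 * φ) with hsdef
  have hs1 : 0 < s1 := Real.sin_pos_of_pos_of_lt_pi (by positivity) hπ
  have hs2 : 0 < s2 := by
    apply Real.sin_pos_of_pos_of_lt_pi
    · nlinarith
    · nlinarith
  have hs : 0 < s := by
    apply Real.sin_pos_of_pos_of_lt_pi
    · linarith
    · nlinarith
  have hadef : a = Real.sqrt (s1 / s2) := rfl
  have hxdef : x = s1 ^ (((r : ℝ) + 1) / 2) / (s * s2 ^ (((r : ℝ) - 1) / 2)) := rfl
  have hwdef : w = (a : ℂ) * Complex.exp (Complex.I * (φ : ℂ)) := rfl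
  -- key real identity
  have ha : a ^ (r + 1) = (s1 / s2) ^ (((r : ℝ) + 1) / 2) := by
    rw [hadef, Real.sqrt_eq_rpow, ← Real.rpow_natCast ((s1 / s2) ^ ((1:ℝ)/2)) (r+1),
      ← Real.rpow_mul (by positivity)]
    congr 1
    push_cast
    ring
  have hK : a ^ (r + 1) * s2 = x * s := by
    rw [ha, hxdef, Real.div_rpow hs1.le hs2.le,
      show ((r:ℝ)+1)/2 = ((r:ℝ)-1)/2 + 1 by ring, Real.rpow_add hs2, Real.rpow_one]
    have h2 : s2 ^ (((r:ℝ)-1)/2) ≠ 0 := by positivity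
    field_simp
  -- trig identities
  have hre : s1 * Real.cos (2 * φ) - s2 = s * Real.cos (((r:ℝ)+1) * φ) := by
    rw [hs1def, hs2def, hsdef, show ((r:ℝ)-1)*φ = ((r:ℝ)+1)*φ - 2*φ by ring,
      Real.sin_sub]
    ring
  have him : s1 * s = s * Real.sin (((r:ℝ)+1) * φ) := by
    rw [hs1def, hsdef]; ring
  have hreC : (s1:ℂ) * (Real.cos (2 * φ) : ℂ) - (s2:ℂ) = (s:ℂ) * (Real.cos (((r:ℝ)+1) * φ) : ℂ) := by
    exact_mod_cast hre
  have himC : (s1:ℂ) * (s:ℂ) = (s:ℂ) * (Real.sin (((r:ℝ)+1) * φ) : ℂ) := by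
    exact_mod_cast him
  set E := Complex.exp (Complex.I * (φ : ℂ)) with hEdef
  have hEn : ∀ n : ℕ, E ^ n = (Real.cos (n * φ) : ℂ) + (Real.sin (n * φ) : ℂ) * Complex.I := by
    intro n
    rw [hEdef, ← Complex.exp_nat_mul,
      show (n:ℂ) * (Complex.I * (φ:ℂ)) = ((n * φ : ℝ) : ℂ) * Complex.I by push_cast; ring,
      Complex.exp_mul_I, ← Complex.ofReal_cos, ← Complex.ofReal_sin]
  have hC : (s1:ℂ) * E ^ 2 - (s2:ℂ) = (s:ℂ) * E ^ (r + 1) := by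
    rw [hEn 2, hEn (r+1), show ((2:ℕ):ℝ) = 2 by norm_num,
      show (((r+1):ℕ):ℝ) = (r:ℝ)+1 by push_cast; ring]
    linear_combination hreC + Complex.I * himC
  -- main equation
  have ha2 : (a:ℂ) ^ 2 = (s1:ℂ) / (s2:ℂ) := by
    have h1 : a ^ 2 = s1 / s2 := by
      rw [hadef]; exact Real.sq_sqrt (by positivity)
    exact_mod_cast h1
  have hKc : (a:ℂ) ^ (r+1) * (s2:ℂ) = (x:ℂ) * (s:ℂ) := by exact_mod_cast hK
  have hs2c : (s2:ℂ) ≠ 0 := by exact_mod_cast hs2.ne'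
  have h1 : w ^ (r + 1) - w ^ 2 * (x : ℂ) + (x : ℂ) = 0 := by
    rw [hwdef, mul_pow, mul_pow, ha2]
    field_simp
    linear_combination E ^ (r + 1) * hKc - (x : ℂ) * hC
  refine ⟨h1, ?_⟩
  have h2 := congrArg (starRingEnd ℂ) h1
  simpa using h2
end

section
/- Let r ≥ 2 be an integer. The map σ : (0, π/(r+1)) → (0, (r+1)^{(r+1)/2}/(2(r−1)^{(r−1)/2})) defined by σ(φ) = (sin((r+1)φ))^{(r+1)/2} / (sin(2φ)·(sin((r−1)φ))^{(r−1)/2}) is a strictly decreasing bijection. -/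
/-!
Write `σ` for the real parameter `c > 1` in place of `r`. On `(0, π/(c+1))`,
`log σ = g_{c+1} - g_2 - g_{c-1}` with `g_t(φ) = (t/2) log sin(tφ)`, and `g_t'(φ) = k(tφ)/(2φ²)`
for `k(u) = u² cot u`. The function `k` is strictly concave on `[0, π)` with `k 0 = 0`, hence
strictly subadditive, and `(c+1)φ = (c-1)φ + 2φ` makes `(log σ)'` negative. As `φ → 0⁺`,
`sin(tφ)/φ → t` gives the limit `(c+1)^{(c+1)/2} / (2 (c-1)^{(c-1)/2})`, while `σ` is continuous up
to `π/(c+1)`, where it vanishes; the intermediate value theorem does the rest.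
-/

open Real Set Filter Topology

noncomputable def sqMulCot (u : ℝ) : ℝ := u ^ 2 * cot u

lemma sq_add_sin_sq_mul_cos_lt {u : ℝ} (hu : u ∈ Ioo 0 π) :
    (u ^ 2 + sin u ^ 2) * cos u < 2 * u * sin u := by
  obtain ⟨hu0, huπ⟩ := hu
  have hsin : 0 < sin u := sin_pos_of_pos_of_lt_pi hu0 huπ
  rcases le_or_gt (cos u) 0 with hcos | hcos
  · nlinarith [mul_pos hu0 hsin]
  have hu2 : u < π / 2 := by
    by_contra! h
    linarith [cos_nonpos_of_pi_div_two_le_of_le h (by linarith)]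
  have hsin_lt : sin u < u := sin_lt hu0
  have hmul_cos_lt : u * cos u < sin u := by
    have := lt_tan hu0 hu2
    rwa [tan_eq_sin_div_cos, lt_div_iff₀ hcos] at this
  -- `2u sin u - (u² + sin² u) cos u = 2u (sin u - u cos u) + (u² - sin² u) cos u`
  nlinarith [mul_pos (mul_pos (sub_pos.2 hsin_lt) (add_pos hu0 hsin)) hcos,
    mul_pos hu0 (sub_pos.2 hmul_cos_lt)]

lemma hasDerivAt_sqMulCot {u : ℝ} (hu : sin u ≠ 0) :
    HasDerivAt sqMulCot ((2 * u * sin u * cos u - u ^ 2) / sin u ^ 2) u := by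
  have h : HasDerivAt (fun x => x ^ 2 * cos x / sin x)
      (((2 * u * cos u + u ^ 2 * -sin u) * sin u - u ^ 2 * cos u * cos u) / sin u ^ 2) u := by
    simpa using ((hasDerivAt_pow 2 u).fun_mul (hasDerivAt_cos u)).fun_div (hasDerivAt_sin u) hu
  convert h using 1
  · ext x; rw [sqMulCot, cot_eq_cos_div_sin, mul_div_assoc]
  · field_simp
    linear_combination u ^ 2 * sin_sq_add_cos_sq u

lemma hasDerivAt_deriv_sqMulCot {u : ℝ} (hu : sin u ≠ 0) :
    HasDerivAt (fun x => (2 * x * sin x * cos x - x ^ 2) / sin x ^ 2)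
      (2 * ((u ^ 2 + sin u ^ 2) * cos u - 2 * u * sin u) / sin u ^ 3) u := by
  have h : HasDerivAt (fun x => (2 * x * sin x * cos x - x ^ 2) / sin x ^ 2)
      ((((2 * sin u + 2 * u * cos u) * cos u + 2 * u * sin u * -sin u - 2 * u) * sin u ^ 2
        - (2 * u * sin u * cos u - u ^ 2) * (2 * sin u * cos u)) / (sin u ^ 2) ^ 2) u := by
    simpa using (((((hasDerivAt_id u).const_mul 2).fun_mul (hasDerivAt_sin u)).fun_mul
      (hasDerivAt_cos u)).fun_sub (hasDerivAt_pow 2 u)).fun_div ((hasDerivAt_sin u).fun_pow 2)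
      (pow_ne_zero 2 hu)
  convert h using 1
  field_simp
  linear_combination u * sin u * sin_sq_add_cos_sq u

lemma continuousOn_sqMulCot : ContinuousOn sqMulCot (Ico 0 π) := by
  have hsinc : ∀ u ∈ Ico 0 π, sinc u ≠ 0 := by
    rintro u ⟨hu0, huπ⟩
    rcases hu0.eq_or_lt with rfl | hu0
    · simp
    · rw [sinc_of_ne_zero hu0.ne']
      exact (div_pos (sin_pos_of_pos_of_lt_pi hu0 huπ) hu0).ne'
  -- `u² cot u = u cos u / sinc u`, and both sides vanish at `0`
  have heq : sqMulCot = fun u => u * cos u / sinc u := by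
    ext u
    rcases eq_or_ne u 0 with rfl | hu
    · simp [sqMulCot]
    · rw [sqMulCot, cot_eq_cos_div_sin, sinc_of_ne_zero hu]
      rcases eq_or_ne (sin u) 0 with hs | hs
      · simp [hs]
      · field_simp
  rw [heq]
  exact ((continuous_id.mul continuous_cos).continuousOn).div continuous_sinc.continuousOn hsinc

lemma strictConcaveOn_sqMulCot : StrictConcaveOn ℝ (Ico 0 π) sqMulCot := by
  refine strictConcaveOn_of_deriv2_neg (convex_Ico 0 π) continuousOn_sqMulCot fun u hu => ?_
  rw [interior_Ico] at hu
  have hsin : 0 < sin u := sin_pos_of_pos_of_lt_pi hu.1 hu.2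
  have hderiv : deriv sqMulCot =ᶠ[𝓝 u] fun x => (2 * x * sin x * cos x - x ^ 2) / sin x ^ 2 := by
    filter_upwards [isOpen_Ioo.mem_nhds hu] with x hx
    exact (hasDerivAt_sqMulCot (sin_pos_of_pos_of_lt_pi hx.1 hx.2).ne').deriv
  rw [Function.iterate_succ_apply, Function.iterate_one, hderiv.deriv_eq,
    (hasDerivAt_deriv_sqMulCot hsin.ne').deriv]
  have := sq_add_sin_sq_mul_cos_lt hu
  exact div_neg_of_neg_of_pos (by linarith) (by positivity)

lemma StrictConcaveOn.map_add_lt {𝕜 : Type*} [Field 𝕜] [LinearOrder 𝕜] [IsStrictOrderedRing 𝕜]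
    {s : Set 𝕜} {f : 𝕜 → 𝕜} (hf : StrictConcaveOn 𝕜 s f) (h0 : 0 ∈ s) (hf0 : f 0 = 0)
    {x y : 𝕜} (hx : 0 < x) (hy : 0 < y) (hxy : x + y ∈ s) : f (x + y) < f x + f y := by
  have hxy0 : 0 < x + y := add_pos hx hy
  have key : ∀ {p q : 𝕜}, 0 < p → 0 < q → p + q = x + y → p / (x + y) * f (x + y) < f p := by
    intro p q hp hq hpq
    have h := hf.2 h0 hxy hxy0.ne (div_pos hq hxy0) (div_pos hp hxy0)
      (by rw [← add_div, add_comm, hpq, div_self hxy0.ne'])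
    simp only [smul_eq_mul, mul_zero, hf0, zero_add] at h
    rwa [div_mul_cancel₀ _ hxy0.ne'] at h
  have := key hx hy rfl
  have := key hy hx (add_comm y x)
  calc f (x + y) = x / (x + y) * f (x + y) + y / (x + y) * f (x + y) := by
        rw [← add_mul, ← add_div, div_self hxy0.ne', one_mul]
    _ < f x + f y := by linarith

lemma sqMulCot_add_lt {x y : ℝ} (hx : 0 < x) (hy : 0 < y) (hxy : x + y < π) :
    sqMulCot (x + y) < sqMulCot x + sqMulCot y :=
  strictConcaveOn_sqMulCot.map_add_lt ⟨le_rfl, pi_pos⟩ (by simp [sqMulCot]) hx hy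
    ⟨by positivity, hxy⟩

theorem StrictAntiOn.bijOn_Ioo_of_tendsto {α β : Type*} [ConditionallyCompleteLinearOrder α]
    [DenselyOrdered α] [TopologicalSpace α] [OrderTopology α] [LinearOrder β] [TopologicalSpace β]
    [OrderClosedTopology β] {f : α → β} {a b : α} {c d : β} (hab : a < b)
    (hf : StrictAntiOn f (Ioo a b)) (hfc : ContinuousOn f (Ioo a b))
    (ha : Tendsto f (𝓝[>] a) (𝓝 c)) (hb : Tendsto f (𝓝[<] b) (𝓝 d)) :
    BijOn f (Ioo a b) (Ioo d c) := by
  have := nhdsGT_neBot_of_exists_gt ⟨b, hab⟩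
  have := nhdsLT_neBot_of_exists_lt ⟨a, hab⟩
  refine ⟨fun x hx => ⟨?_, ?_⟩, hf.injOn, fun y hy => ?_⟩
  · obtain ⟨x', hxx', hx'b⟩ := exists_between hx.2
    have hle : ∀ᶠ z in 𝓝[<] b, f z ≤ f x' := by
      filter_upwards [Ioo_mem_nhdsLT hx'b] with z hz
      exact (hf ⟨hx.1.trans hxx', hx'b⟩ ⟨hx.1.trans (hxx'.trans hz.1), hz.2⟩ hz.1).le
    exact (le_of_tendsto hb hle).trans_lt (hf hx ⟨hx.1.trans hxx', hx'b⟩ hxx')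
  · obtain ⟨x', hax', hx'x⟩ := exists_between hx.1
    have hge : ∀ᶠ z in 𝓝[>] a, f x' ≤ f z := by
      filter_upwards [Ioo_mem_nhdsGT hax'] with z hz
      exact (hf ⟨hz.1, hz.2.trans (hx'x.trans hx.2)⟩ ⟨hax', hx'x.trans hx.2⟩ hz.2).le
    exact (hf ⟨hax', hx'x.trans hx.2⟩ hx hx'x).trans_le (ge_of_tendsto ha hge)
  · obtain ⟨p, hyp, hp⟩ := ((ha.eventually_const_lt hy.2).and (Ioo_mem_nhdsGT hab)).exists
    obtain ⟨q, hqy, hq⟩ := ((hb.eventually_lt_const hy.1).and (Ioo_mem_nhdsLT hp.2)).exists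
    have hsub : Icc p q ⊆ Ioo a b := fun x hx => ⟨hp.1.trans_le hx.1, hx.2.trans_lt hq.2⟩
    obtain ⟨x, hx, rfl⟩ := intermediate_value_Icc' hq.1.le (hfc.mono hsub) ⟨hqy.le, hyp.le⟩
    exact ⟨x, hsub hx, rfl⟩

lemma sin_mul_pos_of_mem_Ioo {t φ : ℝ} (ht : 0 < t) (hφ : φ ∈ Ioo 0 (π / t)) :
    0 < sin (t * φ) :=
  sin_pos_of_pos_of_lt_pi (mul_pos ht hφ.1) (by rw [← lt_div_iff₀' ht]; exact hφ.2)

lemma sin_mul_pos_of_lt {s t φ : ℝ} (ht : 0 < t) (hts : t < s) (hφ : φ ∈ Ioc 0 (π / s)) :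
    0 < sin (t * φ) :=
  sin_mul_pos_of_mem_Ioo ht ⟨hφ.1, hφ.2.trans_lt (div_lt_div_of_pos_left pi_pos ht hts)⟩

lemma tendsto_sin_mul_div_nhdsNE (t : ℝ) :
    Tendsto (fun x => sin (t * x) / x) (𝓝[≠] 0) (𝓝 t) := by
  have hcont : Continuous fun x => t * sinc (t * x) :=
    continuous_const.mul (continuous_sinc.comp (continuous_const.mul continuous_id))
  have h : Tendsto (fun x => t * sinc (t * x)) (𝓝 0) (𝓝 t) := by
    simpa [sinc_zero] using hcont.tendsto 0
  refine (h.mono_left nhdsWithin_le_nhds).congr' ?_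
  filter_upwards [self_mem_nhdsWithin] with x (hx : x ≠ 0)
  rcases eq_or_ne t 0 with rfl | ht
  · simp
  · rw [sinc_of_ne_zero (mul_ne_zero ht hx)]
    field_simp

noncomputable def logSinRpow (t x : ℝ) : ℝ := t / 2 * log (sin (t * x))

lemma hasDerivAt_logSinRpow {t x : ℝ} (hs : sin (t * x) ≠ 0) (hx : x ≠ 0) :
    HasDerivAt (logSinRpow t) (sqMulCot (t * x) / (2 * x ^ 2)) x := by
  have h := (((hasDerivAt_id x).const_mul t).sin.log hs).const_mul (t / 2)
  simp only [id, mul_one] at h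
  refine h.congr_deriv ?_
  rw [sqMulCot, cot_eq_cos_div_sin]
  field_simp

noncomputable def sinPowRatio (c φ : ℝ) : ℝ :=
  sin ((c + 1) * φ) ^ ((c + 1) / 2) / (sin (2 * φ) * sin ((c - 1) * φ) ^ ((c - 1) / 2))

section sinPowRatio

variable {c : ℝ}

lemma sin_pos_of_mem_Ioo_pi_div (hc : 1 < c) {φ : ℝ} (hφ : φ ∈ Ioo 0 (π / (c + 1))) :
    0 < sin ((c + 1) * φ) ∧ 0 < sin (2 * φ) ∧ 0 < sin ((c - 1) * φ) :=
  ⟨sin_mul_pos_of_mem_Ioo (by linarith) hφ,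
    sin_mul_pos_of_lt two_pos (by linarith) (Ioo_subset_Ioc_self hφ),
    sin_mul_pos_of_lt (by linarith) (by linarith) (Ioo_subset_Ioc_self hφ)⟩

lemma sinPowRatio_eq_exp (hc : 1 < c) {φ : ℝ} (hφ : φ ∈ Ioo 0 (π / (c + 1))) :
    sinPowRatio c φ =
      exp (logSinRpow (c + 1) φ - logSinRpow 2 φ - logSinRpow (c - 1) φ) := by
  obtain ⟨h₁, h₂, h₃⟩ := sin_pos_of_mem_Ioo_pi_div hc hφ
  rw [sinPowRatio, rpow_def_of_pos h₁, rpow_def_of_pos h₃, ← exp_log h₂, ← exp_add, ← exp_sub,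
    logSinRpow, logSinRpow, logSinRpow]
  ring_nf

lemma strictAntiOn_logSinPowRatio (hc : 1 < c) :
    StrictAntiOn (fun φ => logSinRpow (c + 1) φ - logSinRpow 2 φ - logSinRpow (c - 1) φ)
      (Ioo 0 (π / (c + 1))) := by
  have hderiv : ∀ φ ∈ Ioo 0 (π / (c + 1)),
      HasDerivAt (fun φ => logSinRpow (c + 1) φ - logSinRpow 2 φ - logSinRpow (c - 1) φ)
        ((sqMulCot ((c + 1) * φ) - sqMulCot (2 * φ) - sqMulCot ((c - 1) * φ)) / (2 * φ ^ 2)) φ := by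
    intro φ hφ
    obtain ⟨h₁, h₂, h₃⟩ := sin_pos_of_mem_Ioo_pi_div hc hφ
    rw [sub_div, sub_div]
    exact ((hasDerivAt_logSinRpow h₁.ne' hφ.1.ne').sub (hasDerivAt_logSinRpow h₂.ne' hφ.1.ne')).sub
      (hasDerivAt_logSinRpow h₃.ne' hφ.1.ne')
  refine strictAntiOn_of_hasDerivWithinAt_neg (convex_Ioo _ _)
    (fun φ hφ => (hderiv φ hφ).continuousAt.continuousWithinAt)
    (fun φ hφ => (hderiv φ (interior_subset hφ)).hasDerivWithinAt) fun φ hφ => ?_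
  rw [interior_Ioo] at hφ
  have hφ0 := hφ.1
  have hsub : sqMulCot ((c + 1) * φ) < sqMulCot ((c - 1) * φ) + sqMulCot (2 * φ) := by
    have := sqMulCot_add_lt (x := (c - 1) * φ) (y := 2 * φ) (by nlinarith) (by linarith)
      (by nlinarith [(lt_div_iff₀ (by linarith : (0 : ℝ) < c + 1)).1 hφ.2])
    rwa [← add_mul, show c - 1 + 2 = c + 1 by ring] at this
  exact div_neg_of_neg_of_pos (by linarith) (by positivity)

lemma sinPowRatio_strictAntiOn (hc : 1 < c) :
    StrictAntiOn (sinPowRatio c) (Ioo 0 (π / (c + 1))) := fun x hx y hy hxy => by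
  rw [sinPowRatio_eq_exp hc hx, sinPowRatio_eq_exp hc hy]
  exact exp_lt_exp.2 (strictAntiOn_logSinPowRatio hc hx hy hxy)

lemma continuousAt_sinPowRatio (hc : 1 < c) {φ : ℝ} (hφ : φ ∈ Ioc 0 (π / (c + 1))) :
    ContinuousAt (sinPowRatio c) φ := by
  have h₂ : 0 < sin (2 * φ) := sin_mul_pos_of_lt two_pos (by linarith) hφ
  have h₃ : 0 < sin ((c - 1) * φ) := sin_mul_pos_of_lt (by linarith) (by linarith) hφ
  refine ((continuous_sin.comp (continuous_const_mul _)).continuousAt.rpow_const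
    (Or.inr (by linarith))).div ((continuous_sin.comp (continuous_const_mul _)).continuousAt.mul
    ((continuous_sin.comp (continuous_const_mul _)).continuousAt.rpow_const (Or.inl h₃.ne')))
    (mul_pos h₂ (rpow_pos_of_pos h₃ _)).ne'

lemma sinPowRatio_pi_div (hc : 1 < c) : sinPowRatio c (π / (c + 1)) = 0 := by
  rw [sinPowRatio, mul_div_cancel₀ _ (by linarith), sin_pi, zero_rpow (by linarith), zero_div]

lemma tendsto_sinPowRatio_nhdsLT (hc : 1 < c) :
    Tendsto (sinPowRatio c) (𝓝[<] (π / (c + 1))) (𝓝 0) := by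
  have h := (continuousAt_sinPowRatio hc ⟨by have := pi_pos; positivity, le_rfl⟩).tendsto
  rw [sinPowRatio_pi_div hc] at h
  exact h.mono_left nhdsWithin_le_nhds

lemma sinPowRatio_eq_div_rpow (hc : 1 < c) {φ : ℝ} (hφ : φ ∈ Ioo 0 (π / (c + 1))) :
    sinPowRatio c φ = (sin ((c + 1) * φ) / φ) ^ ((c + 1) / 2) /
      (sin (2 * φ) / φ * (sin ((c - 1) * φ) / φ) ^ ((c - 1) / 2)) := by
  obtain ⟨h₁, h₂, h₃⟩ := sin_pos_of_mem_Ioo_pi_div hc hφ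
  have hφ0 := hφ.1
  have hpow : φ ^ ((c + 1) / 2) = φ * φ ^ ((c - 1) / 2) := by
    rw [← rpow_one_add' hφ0.le (by linarith)]
    ring_nf
  rw [sinPowRatio, div_rpow h₁.le hφ0.le, div_rpow h₃.le hφ0.le, hpow]
  have := rpow_pos_of_pos hφ0 ((c - 1) / 2)
  have := rpow_pos_of_pos h₃ ((c - 1) / 2)
  field_simp

lemma tendsto_sinPowRatio_nhdsGT (hc : 1 < c) :
    Tendsto (sinPowRatio c) (𝓝[>] 0)
      (𝓝 ((c + 1) ^ ((c + 1) / 2) / (2 * (c - 1) ^ ((c - 1) / 2)))) := by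
  have hlim : ∀ t, Tendsto (fun x => sin (t * x) / x) (𝓝[>] 0) (𝓝 t) := fun t =>
    (tendsto_sin_mul_div_nhdsNE t).mono_left (nhdsGT_le_nhdsNE 0)
  have h := ((hlim (c + 1)).rpow_const (p := (c + 1) / 2) (Or.inl (by linarith))).div
    ((hlim 2).mul ((hlim (c - 1)).rpow_const (p := (c - 1) / 2) (Or.inl (by linarith))))
    (mul_pos two_pos (rpow_pos_of_pos (by linarith) _)).ne'
  refine h.congr' ?_
  filter_upwards [Ioo_mem_nhdsGT (by have := pi_pos; positivity : (0 : ℝ) < π / (c + 1))]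
    with φ hφ
  exact (sinPowRatio_eq_div_rpow hc hφ).symm

lemma sinPowRatio_bijOn (hc : 1 < c) :
    BijOn (sinPowRatio c) (Ioo 0 (π / (c + 1)))
      (Ioo 0 ((c + 1) ^ ((c + 1) / 2) / (2 * (c - 1) ^ ((c - 1) / 2)))) :=
  (sinPowRatio_strictAntiOn hc).bijOn_Ioo_of_tendsto (by have := pi_pos; positivity)
    (fun _ hφ => (continuousAt_sinPowRatio hc (Ioo_subset_Ioc_self hφ)).continuousWithinAt)
    (tendsto_sinPowRatio_nhdsGT hc) (tendsto_sinPowRatio_nhdsLT hc)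

end sinPowRatio

/-- `σ(φ) = (sin((r+1)φ))^{(r+1)/2}/(sin(2φ)(sin((r−1)φ))^{(r−1)/2})` is a
strictly decreasing bijection from `(0, π/(r+1))` onto
`(0, (r+1)^{(r+1)/2}/(2(r−1)^{(r−1)/2}))`. -/
theorem sigma_strictAnti_bijOn (r : ℕ) (hr : 2 ≤ r) :
    let σ : ℝ → ℝ := fun φ =>
      Real.sin (((r : ℝ) + 1) * φ) ^ (((r : ℝ) + 1) / 2) /
        (Real.sin (2 * φ) * Real.sin (((r : ℝ) - 1) * φ) ^ (((r : ℝ) - 1) / 2))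
    let xstar : ℝ := ((r : ℝ) + 1) ^ (((r : ℝ) + 1) / 2) /
      (2 * ((r : ℝ) - 1) ^ (((r : ℝ) - 1) / 2))
    StrictAntiOn σ (Set.Ioo 0 (π / (r + 1))) ∧
      Set.BijOn σ (Set.Ioo 0 (π / (r + 1))) (Set.Ioo 0 xstar) := by
  have hc : (1 : ℝ) < r := by exact_mod_cast hr
  exact ⟨sinPowRatio_strictAntiOn hc, sinPowRatio_bijOn hc⟩
end

section
/- Let r ≥ 2 be an integer and for 0 < φ < π/(r+1) set σ(φ) = (sin((r+1)φ))^{(r+1)/2}/(sin(2φ)·(sin((r−1)φ))^{(r−1)/2}) and f(φ) = π/2 − (r−1)a(φ)sin(φ) + arctan((1−a(φ)²)/(2a(φ)sin(φ))) with a(φ) = (sin((r+1)φ)/sin((r−1)φ))^{1/2}. Then for all φ in (0, π/(r+1)): −(1/π)·f'(φ)/σ'(φ) = sin(2φ)·sin(φ)·(sin((r−1)φ))^{r/2−1} / (π·(sin((r+1)φ))^{r/2}). -/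
/-!
Write `q = sin((r+1)φ) / sin((r-1)φ) = a²`. Eliminating `cos((r ± 1)φ)` through
`sin 2φ · cos((r+1)φ) = sin((r+1)φ) cos 2φ - sin((r-1)φ)` and its companion, both derivatives
turn out to carry the same factor `N = |(r+1) - (r-1) q e^{2iφ}|² > 0`:
`σ' = -σ N / (2 q sin 2φ)` and `f' = N / (4 a cos φ)`. Hence `f'/σ' = -a sin φ / σ`, and splitting
the exponents `(r ± 1)/2 = r/2 ± 1/2` turns `a / σ` into the right-hand side.
-/

open Real Set

noncomputable section

variable {r φ : ℝ}

def sinRatio (r φ : ℝ) : ℝ := sin ((r + 1) * φ) / sin ((r - 1) * φ)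

def commonFactor (r φ : ℝ) : ℝ :=
  (r + 1) ^ 2 + (r - 1) ^ 2 * sinRatio r φ ^ 2 - 2 * (r ^ 2 - 1) * sinRatio r φ * cos (2 * φ)

def densitySigma (r φ : ℝ) : ℝ :=
  sin ((r + 1) * φ) ^ ((r + 1) / 2) / (sin (2 * φ) * sin ((r - 1) * φ) ^ ((r - 1) / 2))

def densityF (r φ : ℝ) : ℝ :=
  π / 2 - (r - 1) * √(sinRatio r φ) * sin φ +
    arctan ((1 - √(sinRatio r φ) ^ 2) / (2 * √(sinRatio r φ) * sin φ))

theorem sin_two_mul_mul_cos_add_one_mul (r φ : ℝ) :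
    sin (2 * φ) * cos ((r + 1) * φ) = sin ((r + 1) * φ) * cos (2 * φ) - sin ((r - 1) * φ) := by
  rw [show (r - 1) * φ = (r + 1) * φ - 2 * φ by ring, sin_sub]; ring

theorem sin_two_mul_mul_cos_sub_one_mul (r φ : ℝ) :
    sin (2 * φ) * cos ((r - 1) * φ) = sin ((r + 1) * φ) - sin ((r - 1) * φ) * cos (2 * φ) := by
  rw [show (r + 1) * φ = (r - 1) * φ + 2 * φ by ring, sin_add]; ring

theorem hasDerivAt_sin_mul (k φ : ℝ) : HasDerivAt (fun x => sin (k * x)) (k * cos (k * φ)) φ := by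
  simpa [mul_comm] using ((hasDerivAt_id φ).const_mul k).sin

theorem hasDerivAt_sin_mul_rpow (k e : ℝ) (h : 0 < sin (k * φ)) :
    HasDerivAt (fun x => sin (k * x) ^ e)
      (e * k * (cos (k * φ) / sin (k * φ)) * sin (k * φ) ^ e) φ := by
  convert (hasDerivAt_sin_mul k φ).rpow_const (p := e) (Or.inl h.ne') using 1
  rw [rpow_sub_one h.ne']
  field_simp

theorem hasDerivAt_sinRatio (hm : sin ((r - 1) * φ) ≠ 0) (h2 : sin (2 * φ) ≠ 0) :
    HasDerivAt (sinRatio r)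
      ((2 * r * cos (2 * φ) * sinRatio r φ - (r + 1) - (r - 1) * sinRatio r φ ^ 2) / sin (2 * φ))
      φ := by
  refine ((hasDerivAt_sin_mul (r + 1) φ).div (hasDerivAt_sin_mul (r - 1) φ) hm).congr_deriv ?_
  have hcp := sin_two_mul_mul_cos_add_one_mul r φ
  have hcm := sin_two_mul_mul_cos_sub_one_mul r φ
  unfold sinRatio
  generalize sin ((r + 1) * φ) = sp, sin ((r - 1) * φ) = sm, sin (2 * φ) = s2,
    cos ((r + 1) * φ) = cp, cos ((r - 1) * φ) = cm, cos (2 * φ) = c2 at *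
  field_simp
  linear_combination (r + 1) * sm * hcp - (r - 1) * sp * hcm

theorem commonFactor_pos (hr : 1 < r) (hq : 0 < sinRatio r φ) (h2 : 0 < sin (2 * φ)) :
    0 < commonFactor r φ := by
  have hsq : commonFactor r φ = ((r + 1) - (r - 1) * sinRatio r φ * cos (2 * φ)) ^ 2
      + ((r - 1) * sinRatio r φ * sin (2 * φ)) ^ 2 := by
    unfold commonFactor
    linear_combination -(r - 1) ^ 2 * sinRatio r φ ^ 2 * (sin_sq_add_cos_sq (2 * φ))
  have hpos : 0 < (r - 1) * sinRatio r φ * sin (2 * φ) := by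
    have hr1 := sub_pos.2 hr
    positivity
  rw [hsq]
  positivity

theorem hasDerivAt_densitySigma (hp : 0 < sin ((r + 1) * φ)) (hm : 0 < sin ((r - 1) * φ))
    (h2 : sin (2 * φ) ≠ 0) :
    HasDerivAt (densitySigma r)
      (-densitySigma r φ * commonFactor r φ / (2 * sinRatio r φ * sin (2 * φ))) φ := by
  refine ((hasDerivAt_sin_mul_rpow (r + 1) ((r + 1) / 2) hp).div
    ((hasDerivAt_sin_mul 2 φ).mul (hasDerivAt_sin_mul_rpow (r - 1) ((r - 1) / 2) hm))
    (mul_ne_zero h2 (rpow_pos_of_pos hm _).ne')).congr_deriv ?_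
  have hcp := sin_two_mul_mul_cos_add_one_mul r φ
  have hcm := sin_two_mul_mul_cos_sub_one_mul r φ
  have hP := rpow_pos_of_pos hp ((r + 1) / 2)
  have hQ := rpow_pos_of_pos hm ((r - 1) / 2)
  unfold densitySigma commonFactor sinRatio
  simp only [Pi.mul_apply]
  generalize sin ((r + 1) * φ) ^ ((r + 1) / 2) = P, sin ((r - 1) * φ) ^ ((r - 1) / 2) = Q at *
  generalize sin ((r + 1) * φ) = sp, sin ((r - 1) * φ) = sm, sin (2 * φ) = s2,
    cos ((r + 1) * φ) = cp, cos ((r - 1) * φ) = cm, cos (2 * φ) = c2 at *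
  field_simp
  linear_combination (r + 1) ^ 2 * sm * hcp - (r - 1) ^ 2 * sp * hcm

theorem hasDerivAt_densityF (hp : 0 < sin ((r + 1) * φ)) (hm : 0 < sin ((r - 1) * φ))
    (hs : 0 < sin φ) (hc : 0 < cos φ) :
    HasDerivAt (densityF r) (commonFactor r φ / (4 * √(sinRatio r φ) * cos φ)) φ := by
  have hq : 0 < sinRatio r φ := div_pos hp hm
  have h2 : sin (2 * φ) ≠ 0 := by rw [sin_two_mul]; positivity
  have ha := (hasDerivAt_sinRatio hm.ne' h2).sqrt hq.ne'
  have hden : 2 * √(sinRatio r φ) * sin φ ≠ 0 := by positivity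
  refine ((((ha.const_mul (r - 1)).mul (hasDerivAt_sin φ)).const_sub (π / 2)).add
    (((ha.pow 2).const_sub 1).div ((ha.const_mul 2).mul (hasDerivAt_sin φ)) hden).arctan
    ).congr_deriv ?_
  have hqa : √(sinRatio r φ) ^ 2 = sinRatio r φ := sq_sqrt hq.le
  have hpy := sin_sq_add_cos_sq φ
  have hapos : 0 < √(sinRatio r φ) := sqrt_pos.2 hq
  unfold commonFactor
  simp only [Pi.mul_apply, Pi.div_apply, Pi.pow_apply, Nat.cast_ofNat, sin_two_mul, cos_two_mul]
  generalize √(sinRatio r φ) = a at *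
  rw [← hqa]
  generalize sin φ = s, cos φ = c at *
  field_simp
  linear_combination -32 * a ^ 2 * ((r + 1) + (r - 1) * a ^ 2) * hpy

theorem densitySigma_pos (hp : 0 < sin ((r + 1) * φ)) (hm : 0 < sin ((r - 1) * φ))
    (h2 : 0 < sin (2 * φ)) : 0 < densitySigma r φ := by
  unfold densitySigma
  positivity

theorem deriv_densityF_div_deriv_densitySigma (hr : 1 < r) (hp : 0 < sin ((r + 1) * φ))
    (hm : 0 < sin ((r - 1) * φ)) (hs : 0 < sin φ) (hc : 0 < cos φ) :
    deriv (densityF r) φ / deriv (densitySigma r) φ =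
      -(sin φ * √(sinRatio r φ) / densitySigma r φ) := by
  have hq : 0 < sinRatio r φ := div_pos hp hm
  have h2 : 0 < sin (2 * φ) := by rw [sin_two_mul]; positivity
  have hN := commonFactor_pos hr hq h2
  have hσ := densitySigma_pos hp hm h2
  have hqa : √(sinRatio r φ) ^ 2 = sinRatio r φ := sq_sqrt hq.le
  have ha : 0 < √(sinRatio r φ) := sqrt_pos.2 hq
  rw [(hasDerivAt_densityF hp hm hs hc).deriv, (hasDerivAt_densitySigma hp hm h2.ne').deriv,
    sin_two_mul]
  generalize √(sinRatio r φ) = a at *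
  rw [← hqa]
  field_simp
  ring

theorem sqrt_sinRatio_div_densitySigma (hp : 0 < sin ((r + 1) * φ)) (hm : 0 < sin ((r - 1) * φ)) :
    √(sinRatio r φ) / densitySigma r φ =
      sin (2 * φ) * sin ((r - 1) * φ) ^ (r / 2 - 1) / sin ((r + 1) * φ) ^ (r / 2) := by
  unfold sinRatio densitySigma
  rw [sqrt_div hp.le, sqrt_eq_rpow, sqrt_eq_rpow, show (r + 1) / 2 = r / 2 + 1 / 2 by ring,
    show (r - 1) / 2 = (r / 2 - 1) + 1 / 2 by ring, rpow_add hp, rpow_add hm]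
  have hU := rpow_pos_of_pos hp (1 / 2)
  have hV := rpow_pos_of_pos hm (1 / 2)
  have hX := rpow_pos_of_pos hp (r / 2)
  generalize sin ((r + 1) * φ) ^ (1 / 2 : ℝ) = U, sin ((r - 1) * φ) ^ (1 / 2 : ℝ) = V,
    sin ((r + 1) * φ) ^ (r / 2) = X at *
  field_simp

end

/-- on `(0, π/(r+1))`,
`−(1/π)·f'(φ)/σ'(φ) = sin(2φ)sin(φ)(sin((r−1)φ))^{r/2−1}/(π(sin((r+1)φ))^{r/2})`. -/
theorem density_identity (r : ℕ) (hr : 2 ≤ r)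
    (a σ f : ℝ → ℝ)
    (ha : ∀ φ, a φ =
      Real.sqrt (Real.sin (((r : ℝ) + 1) * φ) / Real.sin (((r : ℝ) - 1) * φ)))
    (hσ : ∀ φ, σ φ =
      Real.sin (((r : ℝ) + 1) * φ) ^ (((r : ℝ) + 1) / 2) /
        (Real.sin (2 * φ) * Real.sin (((r : ℝ) - 1) * φ) ^ (((r : ℝ) - 1) / 2)))
    (hf : ∀ φ, f φ = π / 2 - ((r : ℝ) - 1) * a φ * Real.sin φ +
        Real.arctan ((1 - a φ ^ 2) / (2 * a φ * Real.sin φ))) :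
    ∀ φ ∈ Set.Ioo 0 (π / (r + 1)),
      -(1 / π) * (deriv f φ / deriv σ φ) =
        Real.sin (2 * φ) * Real.sin φ *
            Real.sin (((r : ℝ) - 1) * φ) ^ ((r : ℝ) / 2 - 1) /
          (π * Real.sin (((r : ℝ) + 1) * φ) ^ ((r : ℝ) / 2)) := by
  rintro φ ⟨hφ, hφπ⟩
  have hr : (1 : ℝ) < r := by exact_mod_cast hr
  have hpφ : ((r : ℝ) + 1) * φ < π := by rwa [lt_div_iff₀ (by positivity), mul_comm] at hφπ
  have hp := sin_pos_of_pos_of_lt_pi (by positivity) hpφ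
  have hm := sin_pos_of_pos_of_lt_pi (by nlinarith) (by nlinarith : ((r : ℝ) - 1) * φ < π)
  have hs := sin_pos_of_pos_of_lt_pi hφ (by nlinarith)
  have hc : 0 < cos φ := cos_pos_of_mem_Ioo ⟨by linarith [pi_pos], by nlinarith⟩
  have hf : f = densityF r := funext fun x => by rw [hf, ha]; rfl
  have hσ : σ = densitySigma r := funext hσ
  rw [hf, hσ, deriv_densityF_div_deriv_densitySigma hr hp hm hs hc,
    mul_div_assoc, sqrt_sinRatio_div_densitySigma hp hm]
  field_simp
end
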